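/- For each of the nine distinguished generators (x,y), let D(x,y) ⊆ duads be the image under the bijection β of the set of nonzero vectors of R(x,y) ∩ (J × J). Then there exist a duad p and three distinct synthemes L1, L2, L3, each containing p, such that D(x,y) = L1 ∪ L2 ∪ L3 and Li ∩ Lj = {p} for all i ≠ j; in particular D(x,y) consists of 7 duads forming three concurrent lines of the doily. -/

import Mathlib

open Matrix

/-- The matrix m(a,b,c,d) = [[a,c,d],[0,b,0],[0,0,b]] over GF(2). -/
def m (a b c d : ZMod 2) : Matrix (Fin 3) (Fin 3) (ZMod 2) :=
  !![a, c, d; 0, b, 0; 0, 0, b]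

lemma m_mul (a b c d a' b' c' d' : ZMod 2) :
    m a b c d * m a' b' c' d' =
      m (a * a') (b * b') (a * c' + c * b') (a * d' + d * b') := by
  ext i j
  fin_cases i <;> fin_cases j <;>
    simp [m, Matrix.mul_apply, Fin.sum_univ_three, Matrix.vecHead, Matrix.vecTail]

/-- The ring R, as a subring of the 3×3 matrices over GF(2). -/
def Rring : Subring (Matrix (Fin 3) (Fin 3) (ZMod 2)) where
  carrier := {A | ∃ a b c d : ZMod 2, A = m a b c d}
  zero_mem' := ⟨0, 0, 0, 0, by ext i j; fin_cases i <;> fin_cases j <;> simp [m, Matrix.vecHead, Matrix.vecTail]⟩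
  one_mem' := ⟨1, 1, 0, 0, by ext i j; fin_cases i <;> fin_cases j <;> simp [m, Matrix.one_apply, Matrix.vecHead, Matrix.vecTail]⟩
  add_mem' := by
    rintro A B ⟨a, b, c, d, rfl⟩ ⟨a', b', c', d', rfl⟩
    exact ⟨a + a', b + b', c + c', d + d',
      by ext i j; fin_cases i <;> fin_cases j <;> simp [m, Matrix.vecHead, Matrix.vecTail]⟩
  neg_mem' := by
    rintro A ⟨a, b, c, d, rfl⟩
    exact ⟨-a, -b, -c, -d,
      by ext i j; fin_cases i <;> fin_cases j <;> simp [m, Matrix.vecHead, Matrix.vecTail]⟩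
  mul_mem' := by
    rintro A B ⟨a, b, c, d, rfl⟩ ⟨a', b', c', d', rfl⟩
    exact ⟨a * a', b * b', a * c' + c * b', a * d' + d * b', m_mul a b c d a' b' c' d'⟩

lemma m_mem (a b c d : ZMod 2) : m a b c d ∈ Rring := ⟨a, b, c, d, rfl⟩

/-- The element m(a,b,c,d) viewed as an element of the ring R. -/
def mm (a b c d : ZMod 2) : Rring := ⟨m a b c d, m_mem a b c d⟩

/-- The cyclic left submodule R(x,y) = {(αx, αy) : α ∈ R} of R², as a set of vectors. -/
def RM (x y : Rring) : Set (Rring × Rring) := {p | ∃ α : Rring, p = (α * x, α * y)}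

def t : Rring := mm 0 0 1 0
def f : Rring := mm 0 0 1 1
def s : Rring := mm 0 0 0 1
def e : Rring := mm 0 1 0 0
def u : Rring := mm 0 1 1 0
def v : Rring := mm 0 1 1 1
def w : Rring := mm 0 1 0 1

/-- The nine distinguished generators. -/
def gens : List (Rring × Rring) :=
  [(t, e), (f, e), (s, e), (e, u), (e, v), (e, w), (e, s), (e, f), (e, t)]

/-- A duad: a 2-element subset of the 6-element set. -/
def IsDuad (p : Finset (Fin 6)) : Prop := p.card = 2

/-- A syntheme: a set of three duads partitioning the 6-element set. -/
def IsSyntheme (L : Finset (Finset (Fin 6))) : Prop :=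
  L.card = 3 ∧ (∀ p ∈ L, IsDuad p) ∧ ∀ i : Fin 6, ∃! p, p ∈ L ∧ i ∈ p

/-- The bijection β from the 15 duads (2-subsets of Fin 6, with 0,…,5 standing for
1,…,6) to the 15 nonzero vectors of J × J. -/
def β (p : Finset (Fin 6)) : Rring × Rring :=
  if p = {0, 1} then (t, t)
  else if p = {0, 2} then (f, t)
  else if p = {0, 3} then (0, s)
  else if p = {0, 4} then (t, s)
  else if p = {0, 5} then (f, 0)
  else if p = {1, 2} then (s, 0)
  else if p = {1, 3} then (t, f)
  else if p = {1, 4} then (0, f)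
  else if p = {1, 5} then (s, t)
  else if p = {2, 3} then (f, f)
  else if p = {2, 4} then (s, f)
  else if p = {2, 5} then (0, t)
  else if p = {3, 4} then (t, 0)
  else if p = {3, 5} then (f, s)
  else if p = {4, 5} then (s, s)
  else 0

/-- D(x,y): the set of duads whose β-image lies in the submodule R(x,y). -/
def Dset (x y : Rring) : Set (Finset (Fin 6)) := {p | IsDuad p ∧ β p ∈ RM x y}

/-!
Every generator has `e` as a coordinate, so `R(x,y) ∩ (J × J)` is a hyperplane of the
four-dimensional `𝔽₂`-space `J × J`; a finite check shows that β pulls it back to `perp p` for a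
duad `p`, the set of duads equal to or disjoint from `p`, i.e. `p` and the points of the doily
collinear with it. The lines of the doily through `p` are the synthemes `{p, q, (p ∪ q)ᶜ}` with
`q` disjoint from `p`. Such a line is determined by `p` and any other of its points, so two of
them meet only in `p`, and together they cover `perp p`.
-/

open Finset

lemma exists_eq_mm (α : Rring) : ∃ a b c d : ZMod 2, α = mm a b c d :=
  let ⟨a, b, c, d, h⟩ := α.2
  ⟨a, b, c, d, Subtype.ext h⟩

lemma mem_RM_iff {x y : Rring} {z : Rring × Rring} :
    z ∈ RM x y ↔ ∃ a b c d : ZMod 2, z = (mm a b c d * x, mm a b c d * y) := by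
  constructor
  · rintro ⟨α, rfl⟩
    obtain ⟨a, b, c, d, rfl⟩ := exists_eq_mm α
    exact ⟨a, b, c, d, rfl⟩
  · rintro ⟨a, b, c, d, rfl⟩
    exact ⟨_, rfl⟩

instance (x y : Rring) : DecidablePred (· ∈ RM x y) := fun _ =>
  decidable_of_iff _ mem_RM_iff.symm

instance : DecidablePred IsDuad := fun p => inferInstanceAs (Decidable (p.card = 2))

instance (x y : Rring) : DecidablePred (· ∈ Dset x y) := fun q =>
  inferInstanceAs (Decidable (IsDuad q ∧ β q ∈ RM x y))

namespace Doily

variable {p q x : Finset (Fin 6)} {L L' : Finset (Finset (Fin 6))}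

def perp (p : Finset (Fin 6)) : Finset (Finset (Fin 6)) :=
  univ.filter fun q => IsDuad q ∧ (q = p ∨ Disjoint p q)

def line (p q : Finset (Fin 6)) : Finset (Finset (Fin 6)) := {p, q, (p ∪ q)ᶜ}

def linesThrough (p : Finset (Fin 6)) : Finset (Finset (Finset (Fin 6))) :=
  (univ.filter fun q => IsDuad q ∧ Disjoint p q).image (line p)

lemma mem_perp : q ∈ perp p ↔ IsDuad q ∧ (q = p ∨ Disjoint p q) := by
  simp [perp]

lemma mem_linesThrough :
    L ∈ linesThrough p ↔ ∃ q, IsDuad q ∧ Disjoint p q ∧ line p q = L := by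
  simp [linesThrough, and_assoc]

lemma mem_line_left : p ∈ line p q := by simp [line]

lemma mem_line_right : q ∈ line p q := by simp [line]

lemma ne_of_disjoint (hp : IsDuad p) (hpq : Disjoint p q) : p ≠ q := by
  rintro rfl
  rw [disjoint_self_iff_empty] at hpq
  simp [IsDuad, hpq] at hp

lemma isDuad_compl_union (hp : IsDuad p) (hq : IsDuad q) (hpq : Disjoint p q) :
    IsDuad (p ∪ q)ᶜ := by
  rw [IsDuad, card_compl, card_union_of_disjoint hpq, hp, hq]
  rfl

lemma disjoint_compl_union_left : Disjoint p (p ∪ q)ᶜ :=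
  disjoint_left.2 fun _ hi hi' => mem_compl.1 hi' (mem_union_left _ hi)

lemma disjoint_compl_union_right : Disjoint q (p ∪ q)ᶜ :=
  disjoint_left.2 fun _ hi hi' => mem_compl.1 hi' (mem_union_right _ hi)

lemma isSyntheme_line (hp : IsDuad p) (hq : IsDuad q) (hpq : Disjoint p q) :
    IsSyntheme (line p q) := by
  have hr := isDuad_compl_union hp hq hpq
  have hpr : Disjoint p (p ∪ q)ᶜ := disjoint_compl_union_left
  have hqr : Disjoint q (p ∪ q)ᶜ := disjoint_compl_union_right
  have hdisj : ∀ L ∈ line p q, ∀ L' ∈ line p q, L ≠ L' → Disjoint L L' := by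
    simp only [line, mem_insert, mem_singleton]
    rintro L (rfl | rfl | rfl) L' (rfl | rfl | rfl) hne <;>
      first | exact absurd rfl hne | assumption | exact Disjoint.symm ‹_›
  refine ⟨card_eq_three.2 ⟨p, q, _, ne_of_disjoint hp hpq, ne_of_disjoint hp hpr,
    ne_of_disjoint hq hqr, rfl⟩, ?_, fun i => ?_⟩
  · simp only [line, mem_insert, mem_singleton]
    rintro L (rfl | rfl | rfl) <;> assumption
  · obtain ⟨L, hL, hiL⟩ : ∃ L ∈ line p q, i ∈ L := by
      by_cases hip : i ∈ p
      · exact ⟨p, mem_line_left, hip⟩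
      by_cases hiq : i ∈ q
      · exact ⟨q, mem_line_right, hiq⟩
      exact ⟨(p ∪ q)ᶜ, by simp [line], by simp [hip, hiq]⟩
    refine ⟨L, ⟨hL, hiL⟩, fun L' ⟨hL', hiL'⟩ => ?_⟩
    by_contra hne
    exact disjoint_left.1 (hdisj _ hL' _ hL hne) hiL' hiL

lemma line_subset_perp (hp : IsDuad p) (hq : IsDuad q) (hpq : Disjoint p q) :
    line p q ⊆ perp p := by
  simp only [line, insert_subset_iff, singleton_subset_iff]
  exact ⟨mem_perp.2 ⟨hp, .inl rfl⟩, mem_perp.2 ⟨hq, .inr hpq⟩,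
    mem_perp.2 ⟨isDuad_compl_union hp hq hpq, .inr disjoint_compl_union_left⟩⟩

lemma line_eq_of_mem (hpq : Disjoint p q) (hx : x ∈ line p q) (hxp : x ≠ p) :
    line p x = line p q := by
  simp only [line, mem_insert, mem_singleton] at hx
  rcases hx with rfl | rfl | rfl
  · exact absurd rfl hxp
  · rfl
  · have hcompl : (p ∪ (p ∪ q)ᶜ)ᶜ = q := by
      ext i
      have : i ∈ q → i ∉ p := fun h => disjoint_right.1 hpq h
      simp only [mem_compl, mem_union]
      tauto
    rw [line, hcompl, pair_comm]
    rfl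

lemma isSyntheme_of_mem_linesThrough (hp : IsDuad p) (hL : L ∈ linesThrough p) :
    IsSyntheme L := by
  obtain ⟨q, hq, hpq, rfl⟩ := mem_linesThrough.1 hL
  exact isSyntheme_line hp hq hpq

lemma mem_of_mem_linesThrough (hL : L ∈ linesThrough p) : p ∈ L := by
  obtain ⟨q, -, -, rfl⟩ := mem_linesThrough.1 hL
  exact mem_line_left

lemma inter_eq_of_mem_linesThrough (hL : L ∈ linesThrough p) (hL' : L' ∈ linesThrough p)
    (hne : L ≠ L') : (↑L ∩ ↑L' : Set (Finset (Fin 6))) = {p} := by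
  obtain ⟨q, -, hpq, rfl⟩ := mem_linesThrough.1 hL
  obtain ⟨q', -, hpq', rfl⟩ := mem_linesThrough.1 hL'
  ext x
  simp only [Set.mem_inter_iff, mem_coe, Set.mem_singleton_iff]
  refine ⟨fun ⟨hx, hx'⟩ => ?_, fun hx => hx ▸ ⟨mem_line_left, mem_line_left⟩⟩
  by_contra hxp
  exact hne ((line_eq_of_mem hpq hx hxp).symm.trans (line_eq_of_mem hpq' hx' hxp))

lemma perp_eq_biUnion_linesThrough (hp : IsDuad p) (hne : (linesThrough p).Nonempty) :
    perp p = (linesThrough p).biUnion id := by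
  ext q
  simp only [mem_biUnion, id]
  constructor
  · intro hq
    obtain ⟨hq, hqp | hpq⟩ := mem_perp.1 hq
    · obtain ⟨L, hL⟩ := hne
      exact ⟨L, hL, hqp ▸ mem_of_mem_linesThrough hL⟩
    · exact ⟨line p q, mem_linesThrough.2 ⟨q, hq, hpq, rfl⟩, mem_line_right⟩
  · rintro ⟨L, hL, hqL⟩
    obtain ⟨q', hq', hpq', rfl⟩ := mem_linesThrough.1 hL
    exact line_subset_perp hp hq' hpq' hqL

lemma card_perp (hp : IsDuad p) : (perp p).card = 7 := by
  revert p
  decide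

lemma card_linesThrough (hp : IsDuad p) : (linesThrough p).card = 3 := by
  revert p
  decide

theorem exists_three_lines_through (hp : IsDuad p) :
    ∃ L1 L2 L3 : Finset (Finset (Fin 6)),
      IsSyntheme L1 ∧ IsSyntheme L2 ∧ IsSyntheme L3 ∧
      L1 ≠ L2 ∧ L1 ≠ L3 ∧ L2 ≠ L3 ∧
      p ∈ L1 ∧ p ∈ L2 ∧ p ∈ L3 ∧
      (perp p : Set (Finset (Fin 6))) = ↑L1 ∪ ↑L2 ∪ ↑L3 ∧
      (↑L1 ∩ ↑L2 : Set (Finset (Fin 6))) = {p} ∧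
      (↑L1 ∩ ↑L3 : Set (Finset (Fin 6))) = {p} ∧
      (↑L2 ∩ ↑L3 : Set (Finset (Fin 6))) = {p} := by
  obtain ⟨L1, L2, L3, h12, h13, h23, hL⟩ := card_eq_three.1 (card_linesThrough hp)
  have h1 : L1 ∈ linesThrough p := by simp [hL]
  have h2 : L2 ∈ linesThrough p := by simp [hL]
  have h3 : L3 ∈ linesThrough p := by simp [hL]
  refine ⟨L1, L2, L3, isSyntheme_of_mem_linesThrough hp h1,
    isSyntheme_of_mem_linesThrough hp h2, isSyntheme_of_mem_linesThrough hp h3,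
    h12, h13, h23, mem_of_mem_linesThrough h1, mem_of_mem_linesThrough h2,
    mem_of_mem_linesThrough h3, ?_, inter_eq_of_mem_linesThrough h1 h2 h12,
    inter_eq_of_mem_linesThrough h1 h3 h13, inter_eq_of_mem_linesThrough h2 h3 h23⟩
  rw [perp_eq_biUnion_linesThrough hp ⟨L1, h1⟩, hL]
  simp only [biUnion_insert, singleton_biUnion, id, coe_union, Set.union_assoc]

end Doily

open Doily

lemma Dset_eq_perp : ∀ g ∈ gens, ∃ p, IsDuad p ∧ Dset g.1 g.2 = perp p := by
  intro g hg
  fin_cases hg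
  exacts [⟨{2, 5}, by decide, Set.ext (by decide)⟩, ⟨{1, 4}, by decide, Set.ext (by decide)⟩,
    ⟨{0, 3}, by decide, Set.ext (by decide)⟩, ⟨{0, 1}, by decide, Set.ext (by decide)⟩,
    ⟨{2, 3}, by decide, Set.ext (by decide)⟩, ⟨{4, 5}, by decide, Set.ext (by decide)⟩,
    ⟨{1, 2}, by decide, Set.ext (by decide)⟩, ⟨{0, 5}, by decide, Set.ext (by decide)⟩,
    ⟨{3, 4}, by decide, Set.ext (by decide)⟩]

/-- For each of the nine distinguished generators (x,y), the trace D(x,y) consists of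
7 duads forming three concurrent lines of the doily: there are a duad p and three
distinct synthemes through p whose union is D(x,y) and which pairwise meet in {p}. -/
theorem traces_are_three_concurrent_lines :
    ∀ g ∈ gens, ∃ p : Finset (Fin 6), IsDuad p ∧
      ∃ L1 L2 L3 : Finset (Finset (Fin 6)),
        IsSyntheme L1 ∧ IsSyntheme L2 ∧ IsSyntheme L3 ∧
        L1 ≠ L2 ∧ L1 ≠ L3 ∧ L2 ≠ L3 ∧
        p ∈ L1 ∧ p ∈ L2 ∧ p ∈ L3 ∧
        Dset g.1 g.2 = ↑L1 ∪ ↑L2 ∪ ↑L3 ∧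
        (↑L1 ∩ ↑L2 : Set (Finset (Fin 6))) = {p} ∧
        (↑L1 ∩ ↑L3 : Set (Finset (Fin 6))) = {p} ∧
        (↑L2 ∩ ↑L3 : Set (Finset (Fin 6))) = {p} ∧
        (Dset g.1 g.2).ncard = 7 := by
  intro g hg
  obtain ⟨p, hp, hD⟩ := Dset_eq_perp g hg
  obtain ⟨L1, L2, L3, hL1, hL2, hL3, h12, h13, h23, hp1, hp2, hp3, hU, hI12, hI13, hI23⟩ :=
    exists_three_lines_through hp
  rw [hD, Set.ncard_coe_finset, card_perp hp]
  exact ⟨p, hp, L1, L2, L3, hL1, hL2, hL3, h12, h13, h23, hp1, hp2, hp3, hU, hI12, hI13, hI23, rfl⟩
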